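/- arXiv:2411.02383 — 3 statements merged into one kernel-verified Lean document; each statement's English description precedes it below -/
import Mathlib

section
/- For any 2×2 real symmetric matrix [[λ₁, a],[a, λ₂]] with λ₁ ≥ λ₂, there exists y with 0 ≤ y ≤ a²/(λ₁ − λ₂) (interpreting the bound as +∞ when λ₁ = λ₂) and an orthogonal 2×2 matrix U such that [[λ₁, a],[a, λ₂]] = Uᵀ · diag(λ₁ + y, λ₂ − y) · U. -/
private lemma aux_orth (c t : ℝ) (hone : c^2+t^2=1) :
    Matrix.transpose !![c, t; -t, c] * !![c, t; -t, c] = (1 : Matrix (Fin 2) (Fin 2) ℝ) := by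
  ext i j
  fin_cases i <;> fin_cases j <;>
    simp [Matrix.mul_apply, Fin.sum_univ_succ] <;> nlinarith [hone]

private lemma aux_decomp (c t m1 m2 lam1 a lam2 : ℝ)
    (e1 : c^2*m1 + t^2*m2 = lam1) (e2 : c*t*(m1-m2) = a) (e3 : t^2*m1+c^2*m2 = lam2) :
    (!![lam1, a; a, lam2] : Matrix (Fin 2) (Fin 2) ℝ)
      = Matrix.transpose !![c, t; -t, c] * Matrix.diagonal ![m1, m2] * !![c, t; -t, c] := by
  ext i j
  fin_cases i <;> fin_cases j <;>
    simp [Matrix.mul_apply, Fin.sum_univ_succ, Matrix.diagonal] <;> nlinarith [e1,e2,e3]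

/-- Any 2×2 real symmetric matrix `[[λ₁, a],[a, λ₂]]` with `λ₁ ≥ λ₂`
can be written as `Uᵀ · diag(λ₁ + y, λ₂ − y) · U` for some orthogonal `U` and some
`y` with `0 ≤ y`, where moreover `y ≤ a²/(λ₁ − λ₂)` whenever `λ₁ > λ₂`. -/
theorem stmt3 (lam1 lam2 a : ℝ) (h : lam2 ≤ lam1) :
    ∃ (y : ℝ) (U : Matrix (Fin 2) (Fin 2) ℝ),
      0 ≤ y ∧
      (lam2 < lam1 → y ≤ a ^ 2 / (lam1 - lam2)) ∧
      U.transpose * U = 1 ∧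
      (!![lam1, a; a, lam2] : Matrix (Fin 2) (Fin 2) ℝ)
        = U.transpose * Matrix.diagonal ![lam1 + y, lam2 - y] * U := by
  have hd0 : 0 ≤ lam1 - lam2 := by linarith
  by_cases hz : (lam1 - lam2) ^ 2 + 4 * a ^ 2 = 0
  · have ha : a = 0 := by nlinarith
    have hdd : lam1 = lam2 := by nlinarith
    refine ⟨0, !![1, 0; -0, 1], le_refl 0, fun hlt => by nlinarith,
      aux_orth 1 0 (by norm_num), ?_⟩
    exact aux_decomp 1 0 (lam1 + 0) (lam2 - 0) lam1 a lam2 (by ring) (by rw [ha]; ring)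
      (by rw [hdd]; ring)
  · obtain ⟨s, hspos, hs2⟩ : ∃ s : ℝ, 0 < s ∧ s ^ 2 = (lam1 - lam2) ^ 2 + 4 * a ^ 2 := by
      refine ⟨Real.sqrt ((lam1 - lam2) ^ 2 + 4 * a ^ 2), ?_, Real.sq_sqrt (by positivity)⟩
      exact Real.sqrt_pos.2 (lt_of_le_of_ne (by positivity) (Ne.symm hz))
    have hds : lam1 - lam2 ≤ s := by nlinarith
    obtain ⟨c, t, hone, hct, hc2⟩ :
        ∃ c t : ℝ, c ^ 2 + t ^ 2 = 1 ∧ c * t * s = a ∧ c ^ 2 * (2 * s) = s + (lam1 - lam2) := by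
      have hsd : 0 < s + (lam1 - lam2) := by linarith
      refine ⟨Real.sqrt ((s + (lam1 - lam2)) / (2 * s)),
        a / (s * Real.sqrt ((s + (lam1 - lam2)) / (2 * s))), ?_, ?_, ?_⟩
      all_goals
        have hcpos : 0 < Real.sqrt ((s + (lam1 - lam2)) / (2 * s)) :=
          Real.sqrt_pos.2 (by positivity)
        have hc2 : Real.sqrt ((s + (lam1 - lam2)) / (2 * s)) ^ 2 = (s + (lam1 - lam2)) / (2 * s) :=
          Real.sq_sqrt (by positivity)
      · rw [div_pow, mul_pow, hc2]
        field_simp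
        nlinarith [hs2]
      · field_simp
      · rw [hc2]; field_simp
    refine ⟨(s - (lam1 - lam2)) / 2, !![c, t; -t, c], by linarith, ?_,
      aux_orth c t hone, ?_⟩
    · intro hlt
      have hdpos : 0 < lam1 - lam2 := by linarith
      rw [div_le_div_iff₀ (by norm_num) hdpos]
      nlinarith [hs2, sq_nonneg (a ^ 2)]
    · exact aux_decomp c t _ _ _ _ _ (by linear_combination (lam2 - (s - (lam1 - lam2)) / 2) * hone + (1/2) * hc2)
        (by linear_combination hct)
        (by linear_combination (lam1 + (s - (lam1 - lam2)) / 2) * hone - (1/2) * hc2)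
end

section
/- Let P and Q be probability measures on the same measurable space and A a measurable event. Then P(A) + Q(Aᶜ) ≥ (1/2) · exp(−D_KL(P ∥ Q)), where D_KL denotes the Kullback–Leibler divergence. -/
open MeasureTheory
open scoped ENNReal Classical

/-- Kullback–Leibler divergence, valued in `ℝ≥0∞`: if `P ≪ Q` and the
log-likelihood ratio is `P`-integrable it equals `∫ log (dP/dQ) dP`, and
it is `∞` otherwise. -/
noncomputable def klDiv {Ω : Type*} [MeasurableSpace Ω] (P Q : Measure Ω) : ℝ≥0∞ :=
  if P ≪ Q ∧ Integrable (fun ω => Real.log (P.rnDeriv Q ω).toReal) P then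
    ENNReal.ofReal (∫ ω, Real.log (P.rnDeriv Q ω).toReal ∂P)
  else ∞

/-- `exp(−d)` for `d : ℝ≥0∞`, with `exp(−∞) = 0`. -/
noncomputable def expNeg (d : ℝ≥0∞) : ℝ≥0∞ :=
  if d = ∞ then 0 else ENNReal.ofReal (Real.exp (-d.toReal))

lemma aux_ofReal_integral_le {Ω : Type*} [MeasurableSpace Ω] (P : Measure Ω) {v : Ω → ℝ}
    (hv : Integrable v P) :
    ENNReal.ofReal (∫ ω, v ω ∂P) ≤ ∫⁻ ω, ENNReal.ofReal (v ω) ∂P := by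
  calc ENNReal.ofReal (∫ ω, v ω ∂P)
      ≤ ENNReal.ofReal (∫ ω, max (v ω) 0 ∂P) :=
        ENNReal.ofReal_le_ofReal (integral_mono hv hv.pos_part (fun ω => le_max_left _ _))
    _ = ∫⁻ ω, ENNReal.ofReal (max (v ω) 0) ∂P :=
        ofReal_integral_eq_lintegral_ofReal hv.pos_part
          (Filter.Eventually.of_forall fun ω => le_max_right _ _)
    _ = ∫⁻ ω, ENNReal.ofReal (v ω) ∂P := by
        congr 1; funext ω
        rcases le_total (v ω) 0 with h | h
        · rw [max_eq_right h, ENNReal.ofReal_zero, ENNReal.ofReal_of_nonpos h]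
        · rw [max_eq_left h]

lemma aux_jensen_exp {Ω : Type*} [MeasurableSpace Ω] (P : Measure Ω) [IsProbabilityMeasure P]
    {u : Ω → ℝ} (hu : Integrable u P) :
    ENNReal.ofReal (Real.exp (∫ ω, u ω ∂P)) ≤ ∫⁻ ω, ENNReal.ofReal (Real.exp (u ω)) ∂P := by
  set m := ∫ ω, u ω ∂P with hm
  have key : (1 : ℝ≥0∞) ≤ ∫⁻ ω, ENNReal.ofReal (Real.exp (u ω - m)) ∂P := by
    have h0 : ENNReal.ofReal (∫ ω, (u ω - m + 1) ∂P) = 1 := by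
      have h' : Integrable (fun ω => u ω - m) P := hu.sub (integrable_const m)
      rw [integral_add h' (integrable_const 1), integral_sub hu (integrable_const m)]
      simp [hm]
    calc (1 : ℝ≥0∞) = ENNReal.ofReal (∫ ω, (u ω - m + 1) ∂P) := h0.symm
      _ ≤ ∫⁻ ω, ENNReal.ofReal (u ω - m + 1) ∂P :=
          aux_ofReal_integral_le P ((hu.sub (integrable_const m)).add (integrable_const 1))
      _ ≤ ∫⁻ ω, ENNReal.ofReal (Real.exp (u ω - m)) ∂P := by
          refine lintegral_mono fun ω => ENNReal.ofReal_le_ofReal ?_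
          linarith [Real.add_one_le_exp (u ω - m)]
  have factor : ∀ ω, ENNReal.ofReal (Real.exp (u ω))
      = ENNReal.ofReal (Real.exp m) * ENNReal.ofReal (Real.exp (u ω - m)) := by
    intro ω
    rw [← ENNReal.ofReal_mul (Real.exp_nonneg m), ← Real.exp_add]
    ring_nf
  calc ENNReal.ofReal (Real.exp m) = ENNReal.ofReal (Real.exp m) * 1 := (mul_one _).symm
    _ ≤ ENNReal.ofReal (Real.exp m) * ∫⁻ ω, ENNReal.ofReal (Real.exp (u ω - m)) ∂P :=
        mul_le_mul_right key _
    _ = ∫⁻ ω, ENNReal.ofReal (Real.exp (u ω)) ∂P := by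
        rw [← lintegral_const_mul' _ _ ENNReal.ofReal_ne_top]
        simp_rw [← factor]

/-- Bretagnolle–Huber: for probability measures `P, Q` on the same
measurable space and any measurable event `A`,
`P(A) + Q(Aᶜ) ≥ (1/2) · exp(−D_KL(P ∥ Q))`. -/
theorem stmt4 {Ω : Type*} [MeasurableSpace Ω] (P Q : Measure Ω)
    [IsProbabilityMeasure P] [IsProbabilityMeasure Q]
    (A : Set Ω) (hA : MeasurableSet A) :
    2⁻¹ * expNeg (klDiv P Q) ≤ P A + Q Aᶜ := by
  rw [klDiv]
  split_ifs with h
  swap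
  · simp [expNeg]
  obtain ⟨hac, hint⟩ := h
  rw [expNeg, if_neg ENNReal.ofReal_ne_top]
  set f : Ω → ℝ≥0∞ := P.rnDeriv Q with hf
  have hfm : Measurable f := Measure.measurable_rnDeriv P Q
  set I : ℝ := ∫ ω, Real.log (f ω).toReal ∂P with hI
  -- reduce the clipped exponent to the real one
  have h1 : ENNReal.ofReal (Real.exp (-(ENNReal.ofReal I).toReal))
      ≤ ENNReal.ofReal (Real.exp (-I)) := by
    refine ENNReal.ofReal_le_ofReal (Real.exp_le_exp.mpr (neg_le_neg ?_))
    rcases le_total 0 I with h | h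
    · rw [ENNReal.toReal_ofReal h]
    · rw [ENNReal.ofReal_of_nonpos h]; simpa using h
  -- main inequality
  have hP : Q.withDensity f = P := Measure.withDensity_rnDeriv_eq P Q hac
  set T : ℝ≥0∞ := ∫⁻ ω, f ω ^ (1/2 : ℝ) ∂Q with hT
  -- Jensen step
  have hu : Integrable (fun ω => -(Real.log (f ω).toReal) / 2) P := (hint.neg).div_const 2
  have hJ : ENNReal.ofReal (Real.exp (-I / 2))
      ≤ ∫⁻ ω, ENNReal.ofReal (Real.exp (-(Real.log (f ω).toReal) / 2)) ∂P := by
    have := aux_jensen_exp P hu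
    rwa [integral_div, integral_neg, ← hI] at this
  -- the P-lintegral equals T
  have hST : (∫⁻ ω, ENNReal.ofReal (Real.exp (-(Real.log (f ω).toReal) / 2)) ∂P) = T := by
    have hgm : Measurable fun ω => ENNReal.ofReal (Real.exp (-Real.log (f ω).toReal / 2)) :=
      (((Real.measurable_log.comp hfm.ennreal_toReal).neg.div_const 2).exp).ennreal_ofReal
    rw [← hP, lintegral_withDensity_eq_lintegral_mul Q hfm hgm]
    refine lintegral_congr_ae ?_
    filter_upwards [Measure.rnDeriv_lt_top P Q] with ω hlt
    show f ω * ENNReal.ofReal (Real.exp (-Real.log (f ω).toReal / 2)) = f ω ^ (1/2 : ℝ)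
    rcases eq_or_ne (f ω) 0 with h0 | h0
    · rw [h0, zero_mul, ENNReal.zero_rpow_of_pos (by norm_num)]
    · have hg : 0 < (f ω).toReal := ENNReal.toReal_pos h0 hlt.ne
      have : Real.exp (-Real.log (f ω).toReal / 2) = (f ω).toReal ^ (-(1/2) : ℝ) := by
        rw [Real.rpow_def_of_pos hg]
        ring_nf
      rw [this, ← ENNReal.ofReal_rpow_of_pos hg, ENNReal.ofReal_toReal hlt.ne]
      calc f ω * f ω ^ (-(1/2) : ℝ) = f ω ^ (1:ℝ) * f ω ^ (-(1/2) : ℝ) := by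
            rw [ENNReal.rpow_one]
        _ = f ω ^ ((1:ℝ) + -(1/2)) := (ENNReal.rpow_add _ _ h0 hlt.ne).symm
        _ = f ω ^ (1/2 : ℝ) := by norm_num
  set M : ℝ≥0∞ := ∫⁻ ω, min (f ω) 1 ∂Q with hM
  set N : ℝ≥0∞ := ∫⁻ ω, max (f ω) 1 ∂Q with hN
  have hf1 : Measurable fun ω => min (f ω) 1 ^ (1/2 : ℝ) :=
    (hfm.min measurable_const).pow_const _
  have hg1 : Measurable fun ω => max (f ω) 1 ^ (1/2 : ℝ) :=
    (hfm.max measurable_const).pow_const _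
  have hCS : T ≤ M ^ (1/2 : ℝ) * N ^ (1/2 : ℝ) := by
    have hpq : (2:ℝ).HolderConjugate 2 := ⟨by norm_num, by norm_num, by norm_num⟩
    have h := ENNReal.lintegral_mul_le_Lp_mul_Lq Q hpq hf1.aemeasurable hg1.aemeasurable
    have e1 : ∀ ω, min (f ω) 1 ^ (1/2 : ℝ) * max (f ω) 1 ^ (1/2 : ℝ) = f ω ^ (1/2 : ℝ) := by
      intro ω
      rw [← ENNReal.mul_rpow_of_nonneg _ _ (by norm_num), min_mul_max, mul_one]
    have e2 : ∀ (x : ℝ≥0∞), (x ^ (1/2 : ℝ)) ^ (2 : ℝ) = x := by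
      intro x
      rw [← ENNReal.rpow_mul]
      norm_num
    calc T = ∫⁻ ω, ((fun ω => min (f ω) 1 ^ (1/2:ℝ)) * fun ω => max (f ω) 1 ^ (1/2:ℝ)) ω ∂Q := by
          rw [hT]; exact (lintegral_congr fun ω => (e1 ω).symm)
      _ ≤ (∫⁻ ω, (min (f ω) 1 ^ (1/2:ℝ)) ^ (2:ℝ) ∂Q) ^ (1/(2:ℝ))
            * (∫⁻ ω, (max (f ω) 1 ^ (1/2:ℝ)) ^ (2:ℝ) ∂Q) ^ (1/(2:ℝ)) := h
      _ = M ^ (1/2 : ℝ) * N ^ (1/2 : ℝ) := by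
          simp_rw [e2]
          rfl
  have hNle : N ≤ 2 := by
    calc N ≤ ∫⁻ ω, (f ω + 1) ∂Q :=
          lintegral_mono fun ω => max_le le_self_add le_add_self
      _ = (∫⁻ ω, f ω ∂Q) + 1 := by rw [lintegral_add_left hfm]; simp
      _ = 2 := by rw [Measure.lintegral_rnDeriv hac]; simp [measure_univ]; norm_num
  have hMle : M ≤ P A + Q Aᶜ := by
    rw [hM, ← lintegral_add_compl _ hA]
    refine add_le_add ?_ ?_
    · calc ∫⁻ ω in A, min (f ω) 1 ∂Q ≤ ∫⁻ ω in A, f ω ∂Q :=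
            lintegral_mono fun ω => min_le_left _ _
        _ = P A := Measure.setLIntegral_rnDeriv' hac hA
    · calc ∫⁻ ω in Aᶜ, min (f ω) 1 ∂Q ≤ ∫⁻ _ in Aᶜ, 1 ∂Q :=
            lintegral_mono fun ω => min_le_right _ _
        _ = Q Aᶜ := by simp
  have hsq : ∀ (x : ℝ≥0∞), x ^ (1/2 : ℝ) * x ^ (1/2 : ℝ) = x := by
    intro x
    rw [← ENNReal.rpow_add_of_nonneg _ _ (by norm_num) (by norm_num)]
    norm_num
  have hfinal : ENNReal.ofReal (Real.exp (-I)) ≤ 2 * (P A + Q Aᶜ) := by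
    have e1 : ENNReal.ofReal (Real.exp (-I))
        = ENNReal.ofReal (Real.exp (-I/2)) * ENNReal.ofReal (Real.exp (-I/2)) := by
      rw [← ENNReal.ofReal_mul (Real.exp_nonneg _), ← Real.exp_add]
      ring_nf
    rw [e1]
    calc ENNReal.ofReal (Real.exp (-I/2)) * ENNReal.ofReal (Real.exp (-I/2))
        ≤ T * T := mul_le_mul' (hST ▸ hJ) (hST ▸ hJ)
      _ ≤ (M ^ (1/2:ℝ) * N ^ (1/2:ℝ)) * (M ^ (1/2:ℝ) * N ^ (1/2:ℝ)) := mul_le_mul' hCS hCS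
      _ = M * N := by rw [mul_mul_mul_comm, hsq, hsq]
      _ ≤ (P A + Q Aᶜ) * 2 := mul_le_mul' hMle hNle
      _ = 2 * (P A + Q Aᶜ) := mul_comm _ _
  calc 2⁻¹ * ENNReal.ofReal (Real.exp (-(ENNReal.ofReal I).toReal))
      ≤ 2⁻¹ * ENNReal.ofReal (Real.exp (-I)) := mul_le_mul_right h1 _
    _ ≤ 2⁻¹ * (2 * (P A + Q Aᶜ)) := mul_le_mul_right hfinal _
    _ = P A + Q Aᶜ := by
        rw [← mul_assoc, ENNReal.inv_mul_cancel (by norm_num) (by norm_num), one_mul]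
end

section
/- Fix positive reals m, d with m²/d > 0 and let a = (m²/d)/log(m²/d + 1). Then for all real ψ ≥ 1: (m²/d · ψ + 1)^{1/ψ} − 1 ≤ (a/ψ) · log(m²/d · ψ + 1). -/
/-- For `m, d > 0`, `a = (m²/d)/log(m²/d + 1)`, and every `ψ ≥ 1`,
`(m²/d · ψ + 1)^{1/ψ} − 1 ≤ (a/ψ) · log(m²/d · ψ + 1)`. -/
theorem stmt9 (m d : ℝ) (hm : 0 < m) (hd : 0 < d) (ψ : ℝ) (hψ : 1 ≤ ψ) :
    (m ^ 2 / d * ψ + 1) ^ (1 / ψ) - 1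
      ≤ (m ^ 2 / d / Real.log (m ^ 2 / d + 1)) / ψ * Real.log (m ^ 2 / d * ψ + 1) := by
  set c : ℝ := m ^ 2 / d with hc_def
  have hc : 0 < c := div_pos (pow_pos hm 2) hd
  have hψ0 : 0 < ψ := lt_of_lt_of_le one_pos hψ
  have h1 : 0 < c * ψ + 1 := by nlinarith
  set x : ℝ := Real.log (c * ψ + 1) / ψ with hx_def
  set y : ℝ := Real.log (c + 1) with hy_def
  have hy : 0 < y := Real.log_pos (by linarith)
  have hx0 : 0 ≤ x := div_nonneg (Real.log_nonneg (by nlinarith)) hψ0.le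
  -- Bernoulli: 1 + ψ*c ≤ (1+c)^ψ, hence x ≤ y
  have hbern : 1 + ψ * c ≤ (1 + c) ^ ψ :=
    one_add_mul_self_le_rpow_one_add (by linarith) hψ
  have hxy : x ≤ y := by
    rw [hx_def, div_le_iff₀ hψ0]
    have hlog : Real.log (c * ψ + 1) ≤ Real.log ((1 + c) ^ ψ) := by
      apply Real.log_le_log h1
      linarith [hbern]
    rw [Real.log_rpow (by linarith)] at hlog
    have h2 : Real.log (1 + c) = y := by rw [hy_def, add_comm]
    nlinarith [hlog, h2]
  set t : ℝ := x / y with ht_def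
  have ht0 : 0 ≤ t := div_nonneg hx0 hy.le
  have ht1 : t ≤ 1 := (div_le_one hy).mpr hxy
  -- convexity of exp
  have hconv := convexOn_exp.2 (Set.mem_univ (0:ℝ)) (Set.mem_univ y)
      (by linarith : (0:ℝ) ≤ 1 - t) ht0 (by ring)
  have hty : (1 - t) * 0 + t * y = x := by
    rw [ht_def, mul_zero, zero_add, div_mul_cancel₀ x hy.ne']
  simp only [smul_eq_mul] at hconv
  rw [hty, Real.exp_zero] at hconv
  have hey : Real.exp y = c + 1 := Real.exp_log (by linarith)
  rw [hey] at hconv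
  -- hconv : exp x ≤ (1-t)*1 + t*(c+1)
  have key : Real.exp x - 1 ≤ c / y * x := by
    have : c / y * x = t * c := by
      rw [ht_def]; ring
    rw [this]; nlinarith
  have hrpow : (c * ψ + 1) ^ (1 / ψ) = Real.exp x := by
    rw [Real.rpow_def_of_pos h1, hx_def]; ring_nf
  rw [hrpow]
  calc Real.exp x - 1 ≤ c / y * x := key
    _ = c / y / ψ * Real.log (c * ψ + 1) := by rw [hx_def]; ring
end
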